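/- Let h_t be exponential with rate 1 and h_u be Gamma(m_L, m_L) distributed (density m_L^{m_L} g^{m_L−1} e^{−m_L g}/Γ(m_L)), independent. Then for ρ, τ, σ², γ > 0, P[h_t ρ/(h_u τ + σ²) > γ] = (m_L^{m_L}/(γτ/ρ + m_L)^{m_L}) · exp(−γσ²/ρ). -/

import Mathlib

/-! Conditionally on `h_u = y`, the event is `h_t > a y + c` with `a = γτ/ρ` and `c = γσ²/ρ`,
which has probability `exp (-(a y + c))` because `h_t` is exponential. Averaging over `h_u`
leaves `exp (-c)` times the Laplace transform of the Gamma law at `a`, and multiplying the Gamma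
density by `exp (-a y)` gives back a Gamma density of rate `m_L + a`, up to the factor
`m_L ^ m_L / (m_L + a) ^ m_L`. -/

open Real MeasureTheory Set ProbabilityTheory

namespace ProbabilityTheory

lemma expMeasure_Ioi {r t : ℝ} (hr : 0 < r) (ht : 0 ≤ t) :
    expMeasure r (Ioi t) = ENNReal.ofReal (exp (-(r * t))) := by
  have := isProbabilityMeasure_expMeasure hr
  have hle : exp (-(r * t)) ≤ 1 := exp_le_one_iff.2 (by nlinarith)
  rw [← compl_Iic, prob_compl_eq_one_sub measurableSet_Iic, ← ofReal_cdf, cdf_expMeasure_eq hr,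
    if_pos ht, ← ENNReal.ofReal_one, ← ENNReal.ofReal_sub _ (sub_nonneg.2 hle), sub_sub_cancel]

lemma ae_nonneg_gammaMeasure (a r : ℝ) : ∀ᵐ y ∂gammaMeasure a r, 0 ≤ y := by
  have hneg : {y : ℝ | ¬0 ≤ y} = Iio 0 := by ext; simp
  rw [ae_iff, hneg, gammaMeasure, withDensity_apply _ measurableSet_Iio]
  exact lintegral_gammaPDF_of_nonpos le_rfl

lemma gammaPDFReal_mul_exp_neg_mul {a r s : ℝ} (hrs : 0 < r + s) (x : ℝ) :
    gammaPDFReal a r x * exp (-(s * x)) = r ^ a / (r + s) ^ a * gammaPDFReal a (r + s) x := by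
  have hpow : (r + s) ^ a ≠ 0 := (rpow_pos_of_pos hrs a).ne'
  unfold gammaPDFReal
  split_ifs
  · rw [show -((r + s) * x) = -(r * x) + -(s * x) by ring, exp_add]
    field_simp
  · simp

lemma lintegral_exp_neg_mul_gammaMeasure {a r s : ℝ} (ha : 0 < a) (hr : 0 < r)
    (hrs : 0 < r + s) :
    ∫⁻ y, ENNReal.ofReal (exp (-(s * y))) ∂gammaMeasure a r
      = ENNReal.ofReal (r ^ a / (r + s) ^ a) := by
  have hdensity : ∀ y, gammaPDF a r y * ENNReal.ofReal (exp (-(s * y)))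
      = ENNReal.ofReal (r ^ a / (r + s) ^ a) * gammaPDF a (r + s) y := fun y => by
    simp only [gammaPDF]
    rw [← ENNReal.ofReal_mul (gammaPDFReal_nonneg ha hr y),
      ← ENNReal.ofReal_mul (by positivity), gammaPDFReal_mul_exp_neg_mul hrs]
  have hmeas (b : ℝ) : Measurable (gammaPDF a b) := (measurable_gammaPDFReal a b).ennreal_ofReal
  rw [gammaMeasure, lintegral_withDensity_eq_lintegral_mul _ (hmeas r) (by fun_prop)]
  simp only [Pi.mul_apply, hdensity]
  rw [lintegral_const_mul _ (hmeas (r + s)), lintegral_gammaPDF_eq_one ha hrs, mul_one]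

lemma measure_lt_of_indepFun_expMeasure {Ω : Type*} {mΩ : MeasurableSpace Ω} {μ : Measure Ω}
    [IsFiniteMeasure μ] {X Y : Ω → ℝ} (hX : AEMeasurable X μ) (hY : AEMeasurable Y μ)
    (hXY : IndepFun X Y μ) {r : ℝ} (hr : 0 < r) (hXlaw : μ.map X = expMeasure r)
    {g : ℝ → ℝ} (hg : Measurable g) (hg_nonneg : ∀ᵐ y ∂μ.map Y, 0 ≤ g y) :
    μ {ω | g (Y ω) < X ω} = ∫⁻ y, ENNReal.ofReal (exp (-(r * g y))) ∂μ.map Y := by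
  have := isProbabilityMeasure_expMeasure hr
  have hS : MeasurableSet {p : ℝ × ℝ | g p.2 < p.1} :=
    measurableSet_lt (hg.comp measurable_snd) measurable_fst
  rw [show {ω | g (Y ω) < X ω} = (fun ω => (X ω, Y ω)) ⁻¹' {p | g p.2 < p.1} from rfl,
    ← Measure.map_apply_of_aemeasurable (hX.prodMk hY) hS, hXY.map_prod_eq_prod_map_map hX hY,
    Measure.prod_apply_symm hS, hXlaw]
  refine lintegral_congr_ae ?_
  filter_upwards [hg_nonneg] with y hy
  exact expMeasure_Ioi hr hy

end ProbabilityTheory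

theorem sinr_coverage_nakagami {Ω : Type*} [MeasureSpace Ω] [IsProbabilityMeasure (ℙ : Measure Ω)]
    (ht hu : Ω → ℝ) (hmeas_t : Measurable ht) (hmeas_u : Measurable hu)
    (hindep : IndepFun ht hu) (hdist_t : Measure.map ht ℙ = expMeasure 1)
    (mL : ℝ) (hmL : 0 < mL) (hdist_u : Measure.map hu ℙ = gammaMeasure mL mL)
    (ρ τ σ2 γ : ℝ) (hρ : 0 < ρ) (hτ : 0 < τ) (hσ : 0 < σ2) (hγ : 0 < γ) :
    ℙ {ω | γ < ht ω * ρ / (hu ω * τ + σ2)}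
      = ENNReal.ofReal ((mL ^ mL / (γ * τ / ρ + mL) ^ mL) * Real.exp (-(γ * σ2 / ρ))) := by
  set a := γ * τ / ρ
  set c := γ * σ2 / ρ
  have hu_nonneg : ∀ᵐ ω ∂(ℙ : Measure Ω), 0 ≤ hu ω :=
    ae_of_ae_map hmeas_u.aemeasurable (hdist_u ▸ ae_nonneg_gammaMeasure mL mL)
  have hevent :
      ℙ {ω | γ < ht ω * ρ / (hu ω * τ + σ2)} = ℙ {ω | a * hu ω + c < ht ω} := by
    refine measure_congr (hu_nonneg.mono fun ω hω => ?_)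
    have hthreshold : a * hu ω + c = γ * (hu ω * τ + σ2) / ρ := by ring
    change (γ < ht ω * ρ / (hu ω * τ + σ2)) = (a * hu ω + c < ht ω)
    rw [eq_iff_iff, lt_div_iff₀ (by positivity), hthreshold, div_lt_iff₀ hρ]
  have hsplit : ∀ y, ENNReal.ofReal (exp (-(1 * (a * y + c))))
      = ENNReal.ofReal (exp (-c)) * ENNReal.ofReal (exp (-(a * y))) := fun y => by
    rw [← ENNReal.ofReal_mul (exp_pos _).le, ← exp_add]
    ring_nf
  rw [hevent, measure_lt_of_indepFun_expMeasure hmeas_t.aemeasurable hmeas_u.aemeasurable hindep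
      one_pos hdist_t (g := fun y => a * y + c) (by fun_prop)
      (hdist_u ▸ (ae_nonneg_gammaMeasure mL mL).mono fun y hy => by positivity),
    hdist_u]
  simp only [hsplit]
  rw [lintegral_const_mul _ (by fun_prop),
    lintegral_exp_neg_mul_gammaMeasure hmL hmL (by positivity),
    ← ENNReal.ofReal_mul (by positivity), add_comm mL a, mul_comm]
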